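/- For a Serre fibration F → E → B with B simply connected, the homology cross product respects the Serre filtrations: the chain-level cross product maps F_p(C_*(E)) ⊗ F_q(C_*(E')) into F_{p+q}(C_*(E × E')) for fibrations E → B, E' → B', and hence induces a pairing of Serre spectral sequences E^r_{p,s}(E) ⊗ E^r_{q,t}(E') → E^r_{p+q,s+t}(E × E'). -/

import Mathlib

open CategoryTheory

/-! ## Singular homology with integer coefficients -/

/-- The singular chain complex functor with integer coefficients: the free simplicial
`ℤ`-module on the singular simplicial set, made into a chain complex via alternating
face maps. -/
noncomputable def singularChainsFunctor : TopCat ⥤ ChainComplex (ModuleCat ℤ) ℕ :=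
  TopCat.toSSet ⋙ ((SimplicialObject.whiskering _ _).obj (ModuleCat.free ℤ)) ⋙
    AlgebraicTopology.alternatingFaceMapComplex (ModuleCat ℤ)

/-- The singular chain complex of a space. -/
noncomputable def singularChains (X : TopCat) : ChainComplex (ModuleCat ℤ) ℕ :=
  singularChainsFunctor.obj X

/-- Singular homology with integer coefficients, as a functor. -/
noncomputable def SHfunctor (n : ℕ) : TopCat ⥤ ModuleCat ℤ :=
  singularChainsFunctor ⋙ HomologicalComplex.homologyFunctor _ _ n

/-- `SH n X` : the `n`-th singular homology group `H_n(X; ℤ)`. -/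
noncomputable def SH (n : ℕ) (X : TopCat) : ModuleCat ℤ := (SHfunctor n).obj X

/-- The map induced on singular homology by a continuous map. -/
noncomputable def SHmap (n : ℕ) {X Y : TopCat} (f : X ⟶ Y) : SH n X ⟶ SH n Y :=
  (SHfunctor n).map f

/-- Transport of the homology grading along an equality of degrees. -/
noncomputable def SHcast {m n : ℕ} (X : TopCat) (h : m = n) : SH m X ≃ₗ[ℤ] SH n X := by
  subst h; exact LinearEquiv.refl ℤ (SH m X)

/-- A singular `n`-simplex of `X`, i.e. a continuous map `Δⁿ → X`. -/
abbrev SingularSimplex (X : TopCat) (n : ℕ) : Type :=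
  (TopCat.toSSet.obj X).obj (Opposite.op (SimplexCategory.mk n))

/-- The constant singular `0`-simplex at a point. -/
noncomputable def constSimplex (X : TopCat) (x : X) : SingularSimplex X 0 :=
  (X.toSSetObjEquiv _).symm (ContinuousMap.const _ x)

/-- The `0`-chain given by the constant `0`-simplex at a point. -/
noncomputable def pointChain (X : TopCat) (x : X) : ((singularChains X).X 0) := by
  exact Finsupp.single (constSimplex X x) 1

/-- The homology class in `H_0(X; ℤ)` of a point. -/
noncomputable def pointClass (X : TopCat) (x : X) : SH 0 X :=
  (show ModuleCat.of ℤ ℤ ⟶ SH 0 X from CategoryStruct.comp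
    ((singularChains X).liftCycles
      (ModuleCat.ofHom (LinearMap.toSpanSingleton ℤ _ (pointChain X x)) :
        ModuleCat.of ℤ ℤ ⟶ (singularChains X).X 0)
      0 (by simp) (by
        rw [(singularChains X).shape 0 0 (by simp)]
        exact Limits.comp_zero))
    ((singularChains X).homologyπ 0)) (1 : ℤ)

/-- The product of two continuous maps, as a morphism between product spaces in `TopCat`. -/
def prodHom {X X' Y Y' : TopCat} (f : X ⟶ X') (g : Y ⟶ Y') :
    TopCat.of (X × Y) ⟶ TopCat.of (X' × Y') :=
  TopCat.ofHom (ContinuousMap.prodMap f.hom g.hom)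

/-- A homology cross product: a natural bilinear pairing
`H_p(X) ⊗ H_q(Y) → H_{p+q}(X × Y)` normalized on points, such as the one induced by the
Eilenberg-Zilber (shuffle) chain map. -/
structure CrossProduct : Type 1 where
  cross : ∀ (p q : ℕ) (X Y : TopCat), SH p X →ₗ[ℤ] SH q Y →ₗ[ℤ] SH (p + q) (TopCat.of (X × Y))
  naturality : ∀ (p q : ℕ) {X X' Y Y' : TopCat} (f : X ⟶ X') (g : Y ⟶ Y')
      (a : SH p X) (b : SH q Y),
      SHmap (p + q) (prodHom f g) (cross p q X Y a b)
        = cross p q X' Y' (SHmap p f a) (SHmap q g b)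
  cross_point : ∀ (X Y : TopCat) (x : X) (y : Y),
      cross 0 0 X Y (pointClass X x) (pointClass Y y)
        = SHcast (TopCat.of (X × Y)) (show (0 : ℕ) = 0 + 0 from rfl)
            (pointClass (TopCat.of (X × Y)) (x, y))

/-! ## Loop spaces and the Pontryagin and Chas-Sullivan products -/

/-- The based loop space of `X` at `x`, as an object of `TopCat`. -/
noncomputable def Loops (X : TopCat) (x : X) : TopCat := TopCat.of (Path x x)

/-- Loop concatenation (traverse the first loop, then the second), as a continuous map. -/
noncomputable def loopConcat {X : TopCat} (x : X) :
    TopCat.of (Path x x × Path x x) ⟶ Loops X x :=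
  TopCat.ofHom ⟨fun p => p.1.trans p.2, Path.continuous_trans⟩

/-- The Pontryagin product on the singular homology of the based loop space: the pairing
induced by loop concatenation together with a homology cross product. -/
noncomputable def pontryagin (χ : CrossProduct) {X : TopCat} (x : X) (p q : ℕ)
    (a : SH p (Loops X x)) (b : SH q (Loops X x)) : SH (p + q) (Loops X x) :=
  SHmap (p + q) (loopConcat x) (χ.cross p q (Loops X x) (Loops X x) a b)

/-- The free loop space `LX = Map(S¹, X)` with the compact-open topology. -/
noncomputable def FreeLoops (X : TopCat) : TopCat := TopCat.of C(Circle, X)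

/-- Evaluation of a free loop at the base point `1 ∈ S¹`. -/
noncomputable def loopEval (X : TopCat) : FreeLoops X ⟶ X :=
  TopCat.ofHom <| show C(C(Circle, X), X) from ⟨fun f => f 1, ContinuousEvalConst.continuous_eval_const 1⟩

/-- An algebra structure of Chas-Sullivan type on the loop homology
`ℍ_*(LM) = H_{*+d}(LM; ℤ)` of a closed oriented `d`-manifold `M`: a graded-commutative,
associative product `ℍ_p ⊗ ℍ_q → ℍ_{p+q}` with unit in `ℍ_0 = H_d(LM)`.  Written on the
underlying singular homology of the free loop space it takes `H_p ⊗ H_q → H_{p+q-d}`. -/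
structure LoopProduct (M : TopCat) (d : ℕ) : Type 1 where
  mul : ∀ (p q r : ℕ), p + q = d + r →
    SH p (FreeLoops M) →ₗ[ℤ] SH q (FreeLoops M) →ₗ[ℤ] SH r (FreeLoops M)
  one : SH d (FreeLoops M)
  one_mul : ∀ (p : ℕ) (a : SH p (FreeLoops M)), mul d p p rfl one a = a
  mul_one : ∀ (p : ℕ) (a : SH p (FreeLoops M)), mul p d p (by ring) a one = a
  mul_assoc : ∀ (p q r s t u : ℕ) (h1 : p + q = d + s) (h2 : s + r = d + t)
      (h3 : q + r = d + u) (h4 : p + u = d + t)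
      (a : SH p (FreeLoops M)) (b : SH q (FreeLoops M)) (c : SH r (FreeLoops M)),
      mul s r t h2 (mul p q s h1 a b) c = mul p u t h4 a (mul q r u h3 b c)
  mul_comm : ∀ (p q r : ℕ) (h : p + q = d + r) (h' : q + p = d + r)
      (a : SH p (FreeLoops M)) (b : SH q (FreeLoops M)),
      mul p q r h a b
        = ((-1 : ℤ) ^ (((p : ℤ) - d) * ((q : ℤ) - d)).toNat) • mul q p r h' b a

/-- The span of the images of the monomials of weighted degree `j` under a ring map out of a
polynomial ring; used to express gradings on polynomial rings and their quotients. -/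
noncomputable def MonPiece {k : ℕ} {R : Type} [CommRing R]
    (f : MvPolynomial (Fin k) ℤ →+* R) (w : Fin k → ℤ) (j : ℤ) : Submodule ℤ R :=
  Submodule.span ℤ
    {x : R | ∃ s : Fin k →₀ ℕ, (∑ i, (s i : ℤ) * w i) = j ∧ x = f (MvPolynomial.monomial s 1)}

/-- Complex projective `n`-space, topologized as a quotient of `ℂ^{n+1} \ {0}`. -/
noncomputable instance CPtop (n : ℕ) : TopologicalSpace (Projectivization ℂ (Fin (n+1) → ℂ)) :=
  inferInstanceAs (TopologicalSpace (_root_.Quotient (projectivizationSetoid ℂ (Fin (n+1) → ℂ))))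

/-- Complex projective `n`-space `ℂPⁿ` as an object of `TopCat`. -/
noncomputable def CP (n : ℕ) : TopCat := TopCat.of (Projectivization ℂ (Fin (n+1) → ℂ))

/-- A base point of `ℂPⁿ`. -/
noncomputable def CPbase (n : ℕ) : CP n :=
  Projectivization.mk ℂ (Pi.single 0 1) (by
    intro h
    simpa using congrFun h 0)

/-! ## The Serre filtration on singular chains -/

/-- The "front face" inclusion `Δᵐ → Δʳ` (the affine map sending vertex `k` to vertex `k`). -/
def frontFace (m r : ℕ) (h : m ≤ r) : SimplexCategory.mk m ⟶ SimplexCategory.mk r :=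
  SimplexCategory.mkHom
    ⟨fun i => ⟨i.1, by have := i.isLt; omega⟩,
     fun a b hab => by simp only [Fin.mk_le_mk]; exact Fin.le_def.mp hab⟩

/-- The "back face" inclusion `Δᵐ → Δʳ` (the affine map sending vertex `k` to `k + (r-m)`). -/
def backFace (m r : ℕ) (h : m ≤ r) : SimplexCategory.mk m ⟶ SimplexCategory.mk r :=
  SimplexCategory.mkHom
    ⟨fun i => ⟨i.1 + (r - m), by have := i.isLt; omega⟩,
     fun a b hab => by
       simp only [Fin.mk_le_mk]
       exact Nat.add_le_add_right (Fin.le_def.mp hab) _⟩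

/-- A singular simplex `T : Δʳ → E` lies in the `p`-th stage of the Serre filtration of the
map `π : E → B` if `π ∘ T = σ(i₀, …, i_r)` for some singular `q`-simplex `σ` of `B` with
`q ≤ p` and some nondecreasing vertex map `(i₀, …, i_r) : Δʳ → Δ^q`. -/
def InSerreFil {E B : TopCat} (π : E ⟶ B) (p : ℕ) {r : ℕ} (T : SingularSimplex E r) : Prop :=
  ∃ q : ℕ, q ≤ p ∧ ∃ (σ : SingularSimplex B q) (f : SimplexCategory.mk r ⟶ SimplexCategory.mk q),
    (TopCat.toSSet.map π).app (Opposite.op (SimplexCategory.mk r)) T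
      = (TopCat.toSSet.obj B).map f.op σ

/-- The `p`-th stage `F_p(C_r(E))` of the Serre filtration of the singular chain complex:
the span of the singular simplices lying in filtration `p`. -/
noncomputable def SerreFilSub {E B : TopCat} (π : E ⟶ B) (p r : ℕ) :
    Submodule ℤ ((singularChains E).X r) := by
  exact Finsupp.supported ℤ ℤ {T : SingularSimplex E r | InSerreFil π p T}

/-- A map is a Serre fibration if it has the homotopy lifting property with respect to all
cubes `[0,1]ⁿ`. -/
def IsSerreFibration {E B : TopCat} (π : E ⟶ B) : Prop :=
  ∀ (n : ℕ) (H : C((Fin n → unitInterval) × unitInterval, B))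
    (h : C(Fin n → unitInterval, E)),
    (∀ y, π (h y) = H (y, 0)) →
    ∃ H' : C((Fin n → unitInterval) × unitInterval, E),
      (∀ z, π (H' z) = H z) ∧ (∀ y, H' (y, 0) = h y)

/-- Extension lemma: a monotone map `h` constant on fibers of `u` (in the strong order sense)
factors through `u` via a monotone map. -/
lemma orderHom_factor {n l m : ℕ} (u : Fin (n+1) →o Fin (l+1)) (h : Fin (n+1) →o Fin (m+1))
    (hc : ∀ k k' : Fin (n+1), u k ≤ u k' → h k ≤ h k') :
    ∃ a : Fin (l+1) →o Fin (m+1), ∀ k, a (u k) = h k := by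
  classical
  set S : Fin (l+1) → Finset (Fin (n+1)) :=
    fun j => Finset.univ.filter (fun k => u k ≤ j) with hS
  refine ⟨⟨fun j => if hne : (S j).Nonempty then h ((S j).max' hne) else h 0, ?_⟩, ?_⟩
  · intro j j' hj
    have hsub : S j ⊆ S j' := by
      intro k hk
      simp only [hS, Finset.mem_filter, Finset.mem_univ, true_and] at hk ⊢
      exact hk.trans hj
    by_cases h1 : (S j).Nonempty
    · have h2 : (S j').Nonempty := h1.mono hsub
      simp only [dif_pos h1, dif_pos h2]
      exact h.mono (Finset.max'_subset h1 hsub)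
    · simp only [dif_neg h1]
      by_cases h2 : (S j').Nonempty
      · simp only [dif_pos h2]
        exact h.mono (Fin.zero_le _)
      · simp only [dif_neg h2]
        exact le_rfl
  · intro k
    have hk : k ∈ S (u k) := by simp [hS]
    have hne : (S (u k)).Nonempty := ⟨k, hk⟩
    show (if hne' : (S (u k)).Nonempty then h ((S (u k)).max' hne') else h 0) = h k
    rw [dif_pos hne]
    have h1 : u ((S (u k)).max' hne) ≤ u k := by
      have := (S (u k)).max'_mem hne
      simp only [hS, Finset.mem_filter, Finset.mem_univ, true_and] at this
      exact this
    have h2 : u k ≤ u ((S (u k)).max' hne) := u.mono ((S (u k)).le_max' k hk)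
    exact le_antisymm (hc _ _ h1) (hc _ _ h2)

/-- Two monotone maps into simplices jointly factor through a single simplex of the
sum dimension. -/
lemma exists_joint_factor (n q₀ q₁ : ℕ)
    (h₁ : Fin (n+1) →o Fin (q₀+1)) (h₂ : Fin (n+1) →o Fin (q₁+1)) :
    ∃ (u : Fin (n+1) →o Fin (q₀+q₁+1)) (a : Fin (q₀+q₁+1) →o Fin (q₀+1))
      (b : Fin (q₀+q₁+1) →o Fin (q₁+1)),
      (∀ k, a (u k) = h₁ k) ∧ (∀ k, b (u k) = h₂ k) := by
  have hbound : ∀ k, (h₁ k : ℕ) + (h₂ k : ℕ) < q₀ + q₁ + 1 := by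
    intro k
    have := (h₁ k).isLt
    have := (h₂ k).isLt
    omega
  set u : Fin (n+1) →o Fin (q₀+q₁+1) :=
    ⟨fun k => ⟨(h₁ k : ℕ) + (h₂ k : ℕ), hbound k⟩, by
      intro k k' hk
      simp only [Fin.mk_le_mk]
      exact Nat.add_le_add (h₁.mono hk) (h₂.mono hk)⟩ with hu
  have hsame : ∀ k k' : Fin (n+1), u k ≤ u k' → h₁ k ≤ h₁ k' ∧ h₂ k ≤ h₂ k' := by
    intro k k' hkk'
    rcases le_total k k' with hle | hle
    · exact ⟨h₁.mono hle, h₂.mono hle⟩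
    · have e1 : h₁ k' ≤ h₁ k := h₁.mono hle
      have e2 : h₂ k' ≤ h₂ k := h₂.mono hle
      have : ((h₁ k : ℕ) + h₂ k) ≤ (h₁ k' : ℕ) + h₂ k' := hkk'
      constructor <;> [skip; skip] <;>
        · rw [Fin.le_def] at e1 e2 ⊢
          omega
  obtain ⟨a, ha⟩ := orderHom_factor u h₁ (fun k k' hk => (hsame k k' hk).1)
  obtain ⟨b, hb⟩ := orderHom_factor u h₂ (fun k k' hk => (hsame k k' hk).2)
  exact ⟨u, a, b, ha, hb⟩

/-- Evaluation of the singular-simplicial-set functoriality: pushing forward along a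
continuous map is postcomposition. -/
lemma toSSet_map_app {X Y : TopCat} (φ : X ⟶ Y) (n : SimplexCategory)
    (T : (TopCat.toSSet.obj X).obj (Opposite.op n)) :
    ((TopCat.toSSet.map φ).app (Opposite.op n) T).down
      = T.down ≫ φ := rfl

/-- The simplicial structure maps of the singular simplicial set are precomposition with
the topological simplex maps. -/
lemma toSSet_obj_map {X : TopCat} {m n : SimplexCategory} (f : m ⟶ n)
    (σ : (TopCat.toSSet.obj X).obj (Opposite.op n)) :
    ((TopCat.toSSet.obj X).map f.op σ).down
      = SimplexCategory.toTop.map f ≫ σ.down := rfl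

/-- **Key simplex-level statement.** If `T` lies in Serre filtration `p` for `π`, `T'` lies in
Serre filtration `q` for `π'`, and both components of `U` factor through `T` and `T'` via
simplicial maps, then `U` lies in Serre filtration `p + q` for `π × π'`. -/
lemma inSerreFil_of_components {E B E' B' : TopCat} (π : E ⟶ B) (π' : E' ⟶ B')
    {p q r s : ℕ} {T : SingularSimplex E r} {T' : SingularSimplex E' s}
    (hT : InSerreFil π p T) (hT' : InSerreFil π' q T')
    (U : SingularSimplex (TopCat.of (E × E')) (r + s))
    (f₁ : SimplexCategory.mk (r + s) ⟶ SimplexCategory.mk r)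
    (g₁ : SimplexCategory.mk (r + s) ⟶ SimplexCategory.mk s)
    (hU1 : (TopCat.toSSet.map (show TopCat.of (E × E') ⟶ E from TopCat.ofHom ContinuousMap.fst)).app
        (Opposite.op (SimplexCategory.mk (r + s))) U = (TopCat.toSSet.obj E).map f₁.op T)
    (hU2 : (TopCat.toSSet.map (show TopCat.of (E × E') ⟶ E' from TopCat.ofHom ContinuousMap.snd)).app
        (Opposite.op (SimplexCategory.mk (r + s))) U = (TopCat.toSSet.obj E').map g₁.op T') :
    InSerreFil (prodHom π π') (p + q) U := by
  obtain ⟨q₀, hq₀, σ, f, hσ⟩ := hT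
  obtain ⟨q₁, hq₁, σ', g, hσ'⟩ := hT'
  obtain ⟨u, a, b, ha, hb⟩ := exists_joint_factor (r + s) q₀ q₁
    (f₁ ≫ f).toOrderHom (g₁ ≫ g).toOrderHom
  let Uc : SimplexCategory.toTop.obj (SimplexCategory.mk (r + s)) ⟶ TopCat.of (E × E') := U.down
  let Tc : SimplexCategory.toTop.obj (SimplexCategory.mk r) ⟶ E := T.down
  let Tc' : SimplexCategory.toTop.obj (SimplexCategory.mk s) ⟶ E' := T'.down
  let σc : SimplexCategory.toTop.obj (SimplexCategory.mk q₀) ⟶ B := σ.down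
  let σc' : SimplexCategory.toTop.obj (SimplexCategory.mk q₁) ⟶ B' := σ'.down
  -- the witnessing simplex of `B × B'`
  let A : SimplexCategory.toTop.obj (SimplexCategory.mk (q₀ + q₁)) ⟶ B :=
    SimplexCategory.toTop.map (SimplexCategory.mkHom a) ≫ σc
  let A' : SimplexCategory.toTop.obj (SimplexCategory.mk (q₀ + q₁)) ⟶ B' :=
    SimplexCategory.toTop.map (SimplexCategory.mkHom b) ≫ σc'
  refine ⟨q₀ + q₁, by omega,
    (show SingularSimplex (TopCat.of (B × B')) (q₀ + q₁) from
      ULift.up (TopCat.ofHom (ContinuousMap.prodMk A.hom A'.hom))),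
    SimplexCategory.mkHom u, ?_⟩
  apply ULift.ext
  rw [toSSet_map_app, toSSet_obj_map]
  -- the two composition identities in the simplex category
  have hcomp₁ : SimplexCategory.mkHom u ≫ SimplexCategory.mkHom a = f₁ ≫ f := by
    apply SimplexCategory.Hom.ext
    ext k
    exact congrArg Fin.val (ha k)
  have hcomp₂ : SimplexCategory.mkHom u ≫ SimplexCategory.mkHom b = g₁ ≫ g := by
    apply SimplexCategory.Hom.ext
    ext k
    exact congrArg Fin.val (hb k)
  have hfst : ∀ x, (Uc x).1 = Tc (SimplexCategory.toTop.map f₁ x) := fun x =>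
    congrArg (fun (φ : SimplexCategory.toTop.obj (SimplexCategory.mk (r+s)) ⟶ E)
      => φ x) ((congrArg ULift.down hU1).trans (toSSet_obj_map f₁ T))
  have hsnd : ∀ x, (Uc x).2 = Tc' (SimplexCategory.toTop.map g₁ x) := fun x =>
    congrArg (fun (φ : SimplexCategory.toTop.obj (SimplexCategory.mk (r+s)) ⟶ E')
      => φ x) ((congrArg ULift.down hU2).trans (toSSet_obj_map g₁ T'))
  have hπT : ∀ z, π (Tc z) = σc (SimplexCategory.toTop.map f z) := fun z =>
    congrArg (fun (φ : SimplexCategory.toTop.obj (SimplexCategory.mk r) ⟶ B)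
      => φ z) ((congrArg ULift.down hσ).trans (toSSet_obj_map f σ))
  have hπT' : ∀ z, π' (Tc' z) = σc' (SimplexCategory.toTop.map g z) := fun z =>
    congrArg (fun (φ : SimplexCategory.toTop.obj (SimplexCategory.mk s) ⟶ B')
      => φ z) ((congrArg ULift.down hσ').trans (toSSet_obj_map g σ'))
  show Uc ≫ prodHom π π'
    = SimplexCategory.toTop.map (SimplexCategory.mkHom u)
      ≫ TopCat.ofHom (ContinuousMap.prodMk A.hom A'.hom)
  apply TopCat.hom_ext
  apply ContinuousMap.ext
  intro x
  apply Prod.ext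
  · show π ((Uc x).1) = A (SimplexCategory.toTop.map (SimplexCategory.mkHom u) x)
    rw [hfst x, hπT]
    show σc (SimplexCategory.toTop.map f (SimplexCategory.toTop.map f₁ x))
      = σc (SimplexCategory.toTop.map (SimplexCategory.mkHom a)
          (SimplexCategory.toTop.map (SimplexCategory.mkHom u) x))
    congr 1
    have h1 : SimplexCategory.toTop.map f (SimplexCategory.toTop.map f₁ x)
        = SimplexCategory.toTop.map (f₁ ≫ f) x := by
      rw [SimplexCategory.toTop.map_comp]; rfl
    have h2 : SimplexCategory.toTop.map (SimplexCategory.mkHom a)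
        (SimplexCategory.toTop.map (SimplexCategory.mkHom u) x)
        = SimplexCategory.toTop.map (SimplexCategory.mkHom u ≫ SimplexCategory.mkHom a) x := by
      rw [SimplexCategory.toTop.map_comp]; rfl
    rw [h1, h2, hcomp₁]
  · show π' ((Uc x).2) = A' (SimplexCategory.toTop.map (SimplexCategory.mkHom u) x)
    rw [hsnd x, hπT']
    show σc' (SimplexCategory.toTop.map g (SimplexCategory.toTop.map g₁ x))
      = σc' (SimplexCategory.toTop.map (SimplexCategory.mkHom b)
          (SimplexCategory.toTop.map (SimplexCategory.mkHom u) x))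
    congr 1
    have h1 : SimplexCategory.toTop.map g (SimplexCategory.toTop.map g₁ x)
        = SimplexCategory.toTop.map (g₁ ≫ g) x := by
      rw [SimplexCategory.toTop.map_comp]; rfl
    have h2 : SimplexCategory.toTop.map (SimplexCategory.mkHom b)
        (SimplexCategory.toTop.map (SimplexCategory.mkHom u) x)
        = SimplexCategory.toTop.map (SimplexCategory.mkHom u ≫ SimplexCategory.mkHom b) x := by
      rw [SimplexCategory.toTop.map_comp]; rfl
    rw [h1, h2, hcomp₂]


/-- Let `π : E → B` and `π' : E' → B'` be Serre fibrations with `B` simply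
connected.  Any chain-level cross product (Eilenberg-Zilber map)
`Z : C_*(E) ⊗ C_*(E') → C_*(E × E')` — i.e. any bilinear chain-level pairing which, on a pair
of simplices `(T, T')`, is supported on simplices of `E × E'` whose two components factor
through `T` and `T'` respectively via affine vertex maps (as the shuffle-sum Eilenberg-Zilber
map is) — respects the Serre filtrations: it maps `F_p(C_*(E)) ⊗ F_q(C_*(E'))` into
`F_{p+q}(C_*(E × E'))` for the product fibration `π × π' : E × E' → B × B'`, and hence
induces a pairing of the associated Serre spectral sequences. -/
theorem cross_product_respects_serre_filtration
    {E B E' B' : TopCat} (π : E ⟶ B) (π' : E' ⟶ B')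
    (hπ : IsSerreFibration π) (hπ' : IsSerreFibration π')
    (hB : SimplyConnectedSpace B)
    (Z : ∀ r s : ℕ, ((singularChains E).X r) →ₗ[ℤ] ((singularChains E').X s) →ₗ[ℤ]
      ((singularChains (TopCat.of (E × E'))).X (r + s)))
    (hZ : ∀ (r s : ℕ) (T : SingularSimplex E r) (T' : SingularSimplex E' s),
      Z r s (Finsupp.single T 1) (Finsupp.single T' 1) ∈
        Finsupp.supported ℤ ℤ {U : SingularSimplex (TopCat.of (E × E')) (r + s) |
          ∃ (f : SimplexCategory.mk (r + s) ⟶ SimplexCategory.mk r)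
            (g : SimplexCategory.mk (r + s) ⟶ SimplexCategory.mk s),
            (TopCat.toSSet.map (show TopCat.of (E × E') ⟶ E from TopCat.ofHom ContinuousMap.fst)).app
                (Opposite.op (SimplexCategory.mk (r + s))) U
              = (TopCat.toSSet.obj E).map f.op T ∧
            (TopCat.toSSet.map (show TopCat.of (E × E') ⟶ E' from TopCat.ofHom ContinuousMap.snd)).app
                (Opposite.op (SimplexCategory.mk (r + s))) U
              = (TopCat.toSSet.obj E').map g.op T'}) :
    ∀ (p q r s : ℕ) (c : (singularChains E).X r) (c' : (singularChains E').X s),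
      c ∈ SerreFilSub π p r → c' ∈ SerreFilSub π' q s →
        Z r s c c' ∈ SerreFilSub (prodHom π π') (p + q) (r + s) := by
  intro p q r s c c' hc hc'
  classical
  -- the target submodule
  set N : Submodule ℤ ((singularChains (TopCat.of (E × E'))).X (r + s)) :=
    SerreFilSub (prodHom π π') (p + q) (r + s) with hN
  -- reduce to single simplices using that the filtration stages are spans of simplices
  have hc₁ : c ∈ Submodule.span ℤ
      ((fun T => Finsupp.single T (1 : ℤ)) '' {T : SingularSimplex E r | InSerreFil π p T}) := by
    rw [← Finsupp.supported_eq_span_single]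
    exact hc
  have hc₂ : c' ∈ Submodule.span ℤ
      ((fun T' => Finsupp.single T' (1 : ℤ)) ''
        {T' : SingularSimplex E' s | InSerreFil π' q T'}) := by
    rw [← Finsupp.supported_eq_span_single]
    exact hc'
  -- single-single case
  have hsingle : ∀ T ∈ {T : SingularSimplex E r | InSerreFil π p T},
      ∀ T' ∈ {T' : SingularSimplex E' s | InSerreFil π' q T'},
      Z r s (Finsupp.single T 1) (Finsupp.single T' 1) ∈ N := by
    intro T hT T' hT'
    refine Finsupp.supported_mono ?_ (hZ r s T T')
    intro U hU
    obtain ⟨f₁, g₁, hU1, hU2⟩ := hU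
    exact inSerreFil_of_components π π' hT hT' U f₁ g₁ hU1 hU2
  refine Submodule.span_induction (p := fun c _ => Z r s c c' ∈ N) ?_ ?_ ?_ ?_ hc₁
  · rintro _ ⟨T, hT, rfl⟩
    refine Submodule.span_induction
      (p := fun c' _ => Z r s (Finsupp.single T 1) c' ∈ N) ?_ ?_ ?_ ?_ hc₂
    · rintro _ ⟨T', hT', rfl⟩
      exact hsingle T hT T' hT'
    · simp only [map_zero]
      exact N.zero_mem
    · intro x y _ _ hx hy
      rw [map_add]
      exact N.add_mem hx hy
    · intro t x _ hx
      rw [map_smul]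
      exact N.smul_mem t hx
  · simp only [map_zero, LinearMap.zero_apply]
    exact N.zero_mem
  · intro x y _ _ hx hy
    rw [map_add]
    exact N.add_mem hx hy
  · intro t x _ hx
    rw [map_smul]
    exact N.smul_mem t hx
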